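/- Fix γ ∈ (0,2) with 4/γ² ∉ ℤ and μ > 0. Set γ' = 4/γ, μ̃ = (μπ l(γ²/4))^{4/γ²} / (π l(4/γ²)), and Q = γ/2 + 2/γ (note γ'/2 + 2/γ' = Q). Then: (i) the Υ-integrand is unchanged under γ ↦ γ', so Υ_{γ'} = Υ_γ on the strip 0 < Re z < Q; and (ii) for all real α₁, α₂, α₃ with ᾱ = α₁+α₂+α₃ such that α₁, α₂, α₃, ᾱ/2 − Q, ᾱ/2 − α₁, ᾱ/2 − α₂, ᾱ/2 − α₃ all lie in the open interval (0,Q), one has Ĉ_{γ,μ}(α₁,α₂,α₃) = Ĉ_{γ',μ̃}(α₁,α₂,α₃). In other words, the normalized DOZZ formula is invariant under the substitution γ/2 ↔ 2/γ, μ ↔ μ̃. -/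
import Mathlib


open MeasureTheory Set

/-- Zamolodchikov's special function `Υ_γ`, defined on the strip `0 < Re z < Q`
(`Q = γ/2 + 2/γ`) as the exponential of the convergent integral. -/
noncomputable def Upsilon (γ : ℝ) (z : ℂ) : ℂ :=
  Complex.exp (∫ t in Set.Ioi (0:ℝ),
    ((((γ/2 + 2/γ : ℝ) : ℂ)/2 - z)^2 * Complex.exp (-(t:ℂ))
      - (Complex.sinh ((((γ/2 + 2/γ : ℝ) : ℂ)/2 - z) * t / 2))^2
        / (Complex.sinh ((γ:ℂ) * t / 4) * Complex.sinh ((t:ℂ) / γ))) / (t:ℂ))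

/-- The special function `l(x) = Γ(x)/Γ(1-x)` (real version). -/
noncomputable def lr (x : ℝ) : ℝ := Real.Gamma x / Real.Gamma (1 - x)

/-- The normalized DOZZ formula `Ĉ_{γ,μ}(α₁,α₂,α₃)` (the DOZZ three point constant with
the overall factor `Υ'_{γ/2}(0)` omitted). -/
noncomputable def Chat (γ μ α₁ α₂ α₃ : ℝ) : ℂ :=
  (((Real.pi * μ * lr (γ^2/4) * (γ/2) ^ (2 - γ^2/2))
      ^ ((2*(γ/2 + 2/γ) - (α₁ + α₂ + α₃))/γ) : ℝ) : ℂ)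
    * Upsilon γ (α₁ : ℂ) * Upsilon γ (α₂ : ℂ) * Upsilon γ (α₃ : ℂ)
    / (Upsilon γ (((α₁ + α₂ + α₃)/2 - (γ/2 + 2/γ) : ℝ) : ℂ)
      * Upsilon γ (((α₁ + α₂ + α₃)/2 - α₁ : ℝ) : ℂ)
      * Upsilon γ (((α₁ + α₂ + α₃)/2 - α₂ : ℝ) : ℂ)
      * Upsilon γ (((α₁ + α₂ + α₃)/2 - α₃ : ℝ) : ℂ))

/-- All seven `Υ`-arguments entering the normalized DOZZ formula lie in `(0, Q)`. -/
def inStrip (γ α₁ α₂ α₃ : ℝ) : Prop :=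
  α₁ ∈ Set.Ioo 0 (γ/2 + 2/γ) ∧ α₂ ∈ Set.Ioo 0 (γ/2 + 2/γ) ∧ α₃ ∈ Set.Ioo 0 (γ/2 + 2/γ) ∧
  (α₁ + α₂ + α₃)/2 - (γ/2 + 2/γ) ∈ Set.Ioo 0 (γ/2 + 2/γ) ∧
  (α₁ + α₂ + α₃)/2 - α₁ ∈ Set.Ioo 0 (γ/2 + 2/γ) ∧
  (α₁ + α₂ + α₃)/2 - α₂ ∈ Set.Ioo 0 (γ/2 + 2/γ) ∧
  (α₁ + α₂ + α₃)/2 - α₃ ∈ Set.Ioo 0 (γ/2 + 2/γ)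

/-- Duality of the DOZZ formula: with `γ' = 4/γ` and
`μ̃ = (μπ l(γ²/4))^{4/γ²}/(π l(4/γ²))`, (i) `Υ_{γ'} = Υ_γ` on the strip `0 < Re z < Q`,
and (ii) `Ĉ_{γ,μ} = Ĉ_{γ',μ̃}` for admissible real weights. -/
theorem dozz_duality (γ μ : ℝ) (hγ : γ ∈ Set.Ioo (0:ℝ) 2)
    (hint : ∀ n : ℤ, (4/γ^2 : ℝ) ≠ (n : ℝ)) (hμ : 0 < μ) :
    (∀ z : ℂ, 0 < z.re → z.re < γ/2 + 2/γ → Upsilon (4/γ) z = Upsilon γ z) ∧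
    (∀ α₁ α₂ α₃ : ℝ, inStrip γ α₁ α₂ α₃ →
      Chat γ μ α₁ α₂ α₃
        = Chat (4/γ) ((μ * Real.pi * lr (γ^2/4)) ^ (4/γ^2) / (Real.pi * lr (4/γ^2)))
            α₁ α₂ α₃) := by
  obtain ⟨hγ0, hγ2⟩ := hγ
  have hγne : γ ≠ 0 := ne_of_gt hγ0
  have hγC : (γ:ℂ) ≠ 0 := by exact_mod_cast hγne
  have hQ : (4/γ)/2 + 2/(4/γ) = γ/2 + 2/γ := by field_simp; ring
  have hUps : ∀ z : ℂ, Upsilon (4/γ) z = Upsilon γ z := by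
    intro z
    unfold Upsilon
    congr 1
    congr 1
    funext t
    rw [hQ]
    have a1 : ((4/γ : ℝ):ℂ) * t / 4 = (t:ℂ) / (γ:ℂ) := by
      push_cast; field_simp
    have a2 : (t:ℂ) / ((4/γ : ℝ):ℂ) = (γ:ℂ) * t / 4 := by
      push_cast; field_simp
    rw [a1, a2, mul_comm (Complex.sinh ((t:ℂ)/(γ:ℂ)))]
  have hπ : (0:ℝ) < Real.pi := Real.pi_pos
  have hl1 : 0 < lr (γ^2/4) := by
    have h1 : 0 < γ^2/4 := by positivity
    have h2 : 0 < 1 - γ^2/4 := by nlinarith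
    exact div_pos (Real.Gamma_pos_of_pos h1) (Real.Gamma_pos_of_pos h2)
  have hl2 : lr (4/γ^2) ≠ 0 := by
    have h1 : (0:ℝ) < 4/γ^2 := by positivity
    have h2 : Real.Gamma (1 - 4/γ^2) ≠ 0 := by
      apply Real.Gamma_ne_zero
      intro m hm
      exact hint (m + 1) (by push_cast; linarith)
    exact div_ne_zero (ne_of_gt (Real.Gamma_pos_of_pos h1)) h2
  have hA : 0 < Real.pi * μ * lr (γ^2/4) := by positivity
  have hg2 : (0:ℝ) < γ/2 := by linarith
  have key : ∀ s : ℝ,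
      (Real.pi * μ * lr (γ^2/4) * (γ/2) ^ (2 - γ^2/2)) ^ (s/γ)
        = (Real.pi * ((μ * Real.pi * lr (γ^2/4)) ^ (4/γ^2) / (Real.pi * lr (4/γ^2)))
            * lr (4/γ^2) * (2/γ) ^ (2 - 8/γ^2)) ^ (s/(4/γ)) := by
    intro s
    set A := Real.pi * μ * lr (γ^2/4) with hAdef
    have hA' : μ * Real.pi * lr (γ^2/4) = A := by rw [hAdef]; ring
    have hbase : Real.pi * ((μ * Real.pi * lr (γ^2/4)) ^ (4/γ^2) / (Real.pi * lr (4/γ^2)))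
        * lr (4/γ^2) = A ^ (4/γ^2) := by
      rw [hA']; field_simp
    rw [hbase]
    have h2g : (2/γ : ℝ) = (γ/2)⁻¹ := by field_simp
    have e1 : (4/γ^2)*(s/(4/γ)) = s/γ := by field_simp
    have e2 : -((2-8/γ^2)*(s/(4/γ))) = (2-γ^2/2)*(s/γ) := by field_simp; ring
    rw [Real.mul_rpow hA.le (Real.rpow_nonneg hg2.le _),
        Real.mul_rpow (Real.rpow_nonneg hA.le _) (Real.rpow_nonneg (by positivity) _),
        ← Real.rpow_mul hA.le, ← Real.rpow_mul hg2.le,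
        ← Real.rpow_mul (by positivity : (0:ℝ) ≤ 2/γ),
        h2g, Real.inv_rpow hg2.le, ← Real.rpow_neg hg2.le, e1, e2]
  refine ⟨fun z _ _ => hUps z, fun α₁ α₂ α₃ _ => ?_⟩
  have h3 : (4/γ)^2/4 = 4/γ^2 := by field_simp
  have h4 : 2 - (4/γ)^2/2 = 2 - 8/γ^2 := by rw [div_pow]; field_simp; ring
  have h2 : (4/γ)/2 = 2/γ := by ring
  simp only [Chat, hUps]
  rw [hQ, h3, h4, h2, key (2*(γ/2 + 2/γ) - (α₁ + α₂ + α₃))]
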